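/- arXiv:2205.05035 — 2 statements merged into one kernel-verified Lean document; each statement's English description precedes it below -/
import Mathlib

section
/- Let 𝔳 = {ν_i}_{i∈I} be a totally ordered set in V with no maximal element such that at least one polynomial is not 𝔳-stable. Let Q be a monic polynomial of smallest degree that is not 𝔳-stable, and take γ ∈ Γ ∪ {∞} with γ > ν_i(Q) for every i ∈ I. Then the map μ defined by μ(f_0 + f_1 Q + … + f_r Q^r) = min_{0≤j≤r} {𝔳(f_j) + jγ}, where f_0 + f_1 Q + … + f_r Q^r is the Q-expansion of f, is a valuation on K[x] with μ|_K = ν_0. -/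
/-!
Polynomials of degree `< deg Q` are `𝔳`-stable, and on them `𝔳` behaves like a valuation, so `μ`
is well defined by uniqueness of `Q`-expansions and satisfies the ultrametric inequality
coefficientwise. For a product, the coefficients `h_m = ∑_{j+k=m} f_j g_k` have degree
`< 2 deg Q`; carrying `h_m = a_m + b_m Q` gives the expansion with coefficients `a_m + b_{m-1}`.
The key point is that `ν_i(Q)` never stabilises and stays below `γ`: hence an eventual lower bound
`S` for `ν_i(h_m)` gives `𝔳(a_m) ≥ S` and `𝔳(b_m) + γ ≥ S` (otherwise `ν_i(b_m Q)` would be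
eventually constant, resp. below `S`), and an eventual exact value of `ν_i(h_m)` is `𝔳(a_m)`. This
gives `μ(fg) ≥ μ(f) + μ(g)`, with equality attained at the index `j₀ + k₀`, where `j₀` and `k₀`
are the least indices attaining `μ(f)` and `μ(g)`.
-/

open Polynomial

/-- An additive valuation (possibly with nontrivial support) on a commutative
ring `R`, with values in `Γ ∪ {∞}`. -/
structure ValOn (R : Type*) [CommRing R] (Γ : Type*) [AddCommGroup Γ] [LinearOrder Γ] [IsOrderedAddMonoid Γ] where
  v : R → WithTop Γ
  v_zero : v 0 = ⊤
  v_one : v 1 = 0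
  v_mul : ∀ a b, v (a * b) = v a + v b
  min_le_v_add : ∀ a b, min (v a) (v b) ≤ v (a + b)

namespace ValOn

variable {R : Type*} [CommRing R] {Γ : Type*} [AddCommGroup Γ] [LinearOrder Γ] [IsOrderedAddMonoid Γ]

theorem v_neg (w : ValOn R Γ) (a : R) : w.v (-a) = w.v a := by
  have h1 : w.v (-1) + w.v (-1) = 0 := by
    rw [← w.v_mul]; norm_num [w.v_one]
  have h2 : w.v (-1) = 0 := by
    cases hx : w.v (-1) with
    | top => rw [hx] at h1; simp at h1
    | coe x =>
        rw [hx, ← WithTop.coe_add, ← WithTop.coe_zero, WithTop.coe_inj] at h1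
        have hx0 : x = 0 := by
          rcases lt_trichotomy x 0 with hc | hc | hc
          · exact absurd h1 (ne_of_lt (add_neg hc hc))
          · exact hc
          · exact absurd h1 (ne_of_gt (add_pos hc hc))
        rw [hx0, WithTop.coe_zero]
  calc w.v (-a) = w.v (-1 * a) := by rw [neg_one_mul]
  _ = w.v a := by rw [w.v_mul, h2, zero_add]

theorem le_v_sum (w : ValOn R Γ) {α : Type*} {γ : WithTop Γ} (s : Finset α) (h : α → R)
    (H : ∀ t ∈ s, γ ≤ w.v (h t)) : γ ≤ w.v (∑ t ∈ s, h t) := by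
  classical
  induction s using Finset.induction_on with
  | empty => simp [w.v_zero]
  | insert _ _ hx ih =>
      rw [Finset.sum_insert hx]
      refine le_trans ?_ (w.min_le_v_add _ _)
      rw [le_min_iff]
      exact ⟨H _ (Finset.mem_insert_self _ _),
        ih fun t ht => H t (Finset.mem_insert_of_mem ht)⟩

theorem lt_v_sum (w : ValOn R Γ) {α : Type*} {γ : WithTop Γ} (hγ : γ ≠ ⊤) (s : Finset α)
    (h : α → R) (H : ∀ t ∈ s, γ < w.v (h t)) : γ < w.v (∑ t ∈ s, h t) := by
  classical
  induction s using Finset.induction_on with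
  | empty => simp [w.v_zero]; exact lt_top_iff_ne_top.mpr hγ
  | insert _ _ hx ih =>
      rw [Finset.sum_insert hx]
      refine lt_of_lt_of_le ?_ (w.min_le_v_add _ _)
      rw [lt_min_iff]
      exact ⟨H _ (Finset.mem_insert_self _ _),
        ih fun t ht => H t (Finset.mem_insert_of_mem ht)⟩

/-- The subring `⊕_{γ ∈ Γ} P_γ` of the monoid algebra `R[Γ]`, where
`P_γ = {f : γ ≤ v f}`.  The graded ring `G_v = ⊕_γ P_γ/P_γ⁺` is realized below as the
quotient of this subring by the ideal `⊕_γ P_γ⁺`. -/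
def gradedCarrier (w : ValOn R Γ) : Subring (AddMonoidAlgebra R Γ) where
  carrier := {s | ∀ γ : Γ, (γ : WithTop Γ) ≤ w.v (s.coeff γ)}
  zero_mem' := by intro γ; simp [w.v_zero]
  one_mem' := by
    intro γ
    classical
    show (γ : WithTop Γ) ≤ w.v ((AddMonoidAlgebra.single (0:Γ) (1:R)).coeff γ)
    rw [AddMonoidAlgebra.coeff_single, Finsupp.single_apply]
    split_ifs with h
    · subst h; simp [w.v_one]
    · simp [w.v_zero]
  add_mem' := by
    intro a b ha hb γ
    refine le_trans ?_ (w.min_le_v_add _ _)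
    exact le_min (ha γ) (hb γ)
  neg_mem' := by
    intro a ha γ
    show (γ : WithTop Γ) ≤ w.v ((-a).coeff γ)
    rw [AddMonoidAlgebra.coeff_neg, Finsupp.neg_apply, w.v_neg]
    exact ha γ
  mul_mem' := by
    classical
    intro a b ha hb γ
    rw [AddMonoidAlgebra.coeff_mul]
    rw [Finsupp.sum]
    refine w.le_v_sum _ _ (fun α hα => ?_)
    rw [Finsupp.sum]
    refine w.le_v_sum _ _ (fun β hβ => ?_)
    split_ifs with h
    · subst h
      rw [w.v_mul, WithTop.coe_add]
      exact add_le_add (ha α) (hb β)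
    · simp [w.v_zero]

/-- The ideal `⊕_{γ ∈ Γ} P_γ⁺` of `gradedCarrier w`. -/
def gradedIdeal (w : ValOn R Γ) : Ideal (gradedCarrier w) where
  carrier := {s | ∀ γ : Γ, (γ : WithTop Γ) < w.v ((s : AddMonoidAlgebra R Γ).coeff γ)}
  zero_mem' := by intro γ; simp [w.v_zero]
  add_mem' := by
    intro a b ha hb γ
    refine lt_of_lt_of_le ?_ (w.min_le_v_add _ _)
    exact lt_min (ha γ) (hb γ)
  smul_mem' := by
    classical
    intro c x hx γ
    rw [smul_eq_mul]
    show (γ : WithTop Γ) < w.v (((c : AddMonoidAlgebra R Γ) * (x : AddMonoidAlgebra R Γ)).coeff γ)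
    rw [AddMonoidAlgebra.coeff_mul, Finsupp.sum]
    refine w.lt_v_sum (WithTop.coe_ne_top) _ _ (fun α hα => ?_)
    rw [Finsupp.sum]
    refine w.lt_v_sum (WithTop.coe_ne_top) _ _ (fun β hβ => ?_)
    split_ifs with h
    · subst h
      rw [w.v_mul, WithTop.coe_add]
      exact WithTop.add_lt_add_of_le_of_lt WithTop.coe_ne_top (c.2 α) (hx β)
    · simp [w.v_zero]
end ValOn

/-- The graded ring `G_w = ⊕_{γ} P_γ/P_γ⁺` associated to the valuation `w`,
realized as a quotient. -/
abbrev Graded {R : Type*} [CommRing R] {Γ : Type*} [AddCommGroup Γ] [LinearOrder Γ] [IsOrderedAddMonoid Γ]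
    (w : ValOn R Γ) : Type _ :=
  (ValOn.gradedCarrier w) ⧸ (ValOn.gradedIdeal w)

namespace ValOn

variable {R : Type*} [CommRing R] {Γ : Type*} [AddCommGroup Γ] [LinearOrder Γ] [IsOrderedAddMonoid Γ]

/-- `inv_w f`, the initial form (image of `f` in the homogeneous component
`P_{v f}/P_{v f}⁺` of the graded ring), with `inv_w f = 0` when `f ∈ supp w`. -/
noncomputable def initialForm (w : ValOn R Γ) (f : R) : Graded w :=
  if h : w.v f = ⊤ then 0
  else Ideal.Quotient.mk (gradedIdeal w)
    ⟨AddMonoidAlgebra.single ((w.v f).untop h) f, by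
      intro γ
      classical
      show (γ : WithTop Γ) ≤ w.v ((AddMonoidAlgebra.single ((w.v f).untop h) f).coeff γ)
      rw [AddMonoidAlgebra.coeff_single, Finsupp.single_apply]
      split_ifs with hh
      · rw [← hh, WithTop.coe_untop]
      · simp [w.v_zero]⟩

theorem gradedCarrier_mono {w₁ w₂ : ValOn R Γ} (h : ∀ f, w₁.v f ≤ w₂.v f) :
    gradedCarrier w₁ ≤ gradedCarrier w₂ :=
  fun s hs γ => (hs γ).trans (h _)

/-- The homomorphism `φ : G_{w₁} → G_{w₂}` of graded rings, for `w₁ ≤ w₂`: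
it sends `inv_{w₁} f` to `inv_{w₂} f` if `w₁ f = w₂ f` and to `0` if `w₁ f < w₂ f`. -/
noncomputable def phi (w₁ w₂ : ValOn R Γ) (h : ∀ f, w₁.v f ≤ w₂.v f) :
    Graded w₁ →+* Graded w₂ :=
  Ideal.Quotient.lift (gradedIdeal w₁)
    ((Ideal.Quotient.mk (gradedIdeal w₂)).comp (Subring.inclusion (gradedCarrier_mono h)))
    (by
      intro a ha
      rw [RingHom.comp_apply, Ideal.Quotient.eq_zero_iff_mem]
      exact fun γ => lt_of_lt_of_le (ha γ) (h _))

end ValOn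


open ValOn

section PolyDefs

variable {K : Type*} [Field K] {Γ : Type*} [AddCommGroup Γ] [LinearOrder Γ] [IsOrderedAddMonoid Γ]

/-- A polynomial `f` is `𝔳`-stable for a family `𝔳 = (ν_i)_{i ∈ I}` if the values `ν_i(f)`
eventually stabilize. -/
def Stable {I : Type*} [Preorder I] (ν : I → ValOn (Polynomial K) Γ) (f : Polynomial K) : Prop :=
  ∃ i : I, ∀ j : I, i ≤ j → (ν j).v f = (ν i).v f

/-- The truncation `w_q` of `w` at `q`:
`w_q(f) = min_j w(f_j q^j)` where `f = ∑ f_j q^j` is the `q`-expansion of `f`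
(for monic non-constant `q`, the `j`-th coefficient of the `q`-expansion is
`(f /ₘ q^j) %ₘ q`, and all the nonzero coefficients occur for `j ≤ natDegree f`). -/
noncomputable def truncVal (w : ValOn (Polynomial K) Γ) (q f : Polynomial K) : WithTop Γ :=
  (Finset.range (f.natDegree + 1)).inf' Finset.nonempty_range_add_one
    (fun j => w.v (((f /ₘ q ^ j) %ₘ q) * q ^ j))

/-- `δ(f) = max {ν̄(x - a) : a a root of f}` for a polynomial over an algebraically closed
field, with the convention `δ(f) = ⊥ = -∞` when `f` has no roots (e.g. `deg f = 0`). -/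
noncomputable def deltaOf {F : Type*} [Field F] (wbar : ValOn (Polynomial F) Γ)
    (f : Polynomial F) : WithBot (WithTop Γ) :=
  (f.roots.map (fun a => ((wbar.v (X - C a) : WithTop Γ) : WithBot (WithTop Γ)))).sup

/-- `δ(f)` of `f ∈ K[x]`, computed via the fixed extension `ν̄` of `ν` to `K̄[x]`. -/
noncomputable def delta (wbar : ValOn (Polynomial (AlgebraicClosure K)) Γ)
    (f : Polynomial K) : WithBot (WithTop Γ) :=
  deltaOf wbar (f.map (algebraMap K (AlgebraicClosure K)))

/-- `Q` is a key polynomial (of level `δ(Q)`) for the valuation `ν` (with fixed extension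
`ν̄` to `K̄[x]`): `Q` is monic and `δ(f) ≥ δ(Q) → deg f ≥ deg Q` for every nonzero `f`. -/
def IsKeyPoly (wbar : ValOn (Polynomial (AlgebraicClosure K)) Γ) (Q : Polynomial K) : Prop :=
  Q.Monic ∧ ∀ f : Polynomial K, f ≠ 0 → delta wbar Q ≤ delta wbar f → Q.degree ≤ f.degree

/-- `Ψ_n`: the set of key polynomials of degree `n`. -/
def Psi (wbar : ValOn (Polynomial (AlgebraicClosure K)) Γ) (n : ℕ) : Set (Polynomial K) :=
  {Q | IsKeyPoly wbar Q ∧ Q.natDegree = n}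

/-- The set `K_n = {f : ν_Q(f) < ν(f) for all Q ∈ Ψ_n}`. -/
def LimitSet (w : ValOn (Polynomial K) Γ) (wbar : ValOn (Polynomial (AlgebraicClosure K)) Γ)
    (n : ℕ) : Set (Polynomial K) :=
  {f | ∀ Q ∈ Psi wbar n, truncVal w Q f < w.v f}

/-- A limit key polynomial for `Ψ_n`: a monic polynomial in `K_n` of least degree. -/
def IsLimitKeyPoly (w : ValOn (Polynomial K) Γ)
    (wbar : ValOn (Polynomial (AlgebraicClosure K)) Γ) (n : ℕ) (Qn : Polynomial K) : Prop :=
  Qn.Monic ∧ Qn ∈ LimitSet w wbar n ∧ ∀ g ∈ LimitSet w wbar n, Qn.degree ≤ g.degree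

/-- `g` is `𝔳`-stable for the family `𝔳 = (ν_Q)_{Q ∈ Ψ_n}`, ordered by `Q ⪯ Q' ↔ ν_Q ≤ ν_{Q'}`. -/
def PsiStable (w : ValOn (Polynomial K) Γ) (wbar : ValOn (Polynomial (AlgebraicClosure K)) Γ)
    (n : ℕ) (g : Polynomial K) : Prop :=
  ∃ Q ∈ Psi wbar n, ∀ Q' ∈ Psi wbar n,
    (∀ h : Polynomial K, truncVal w Q h ≤ truncVal w Q' h) → truncVal w Q' g = truncVal w Q g

/-- `v` is a Krull valuation: its support is trivial. -/
def IsKrullVal (v : Polynomial K → WithTop Γ) : Prop :=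
  ∀ f : Polynomial K, f ≠ 0 → v f ≠ ⊤

/-- The quotient group `v(K[x])/ν₀K` is a torsion group: every value of `v` has a positive
multiple lying in the value group of `ν₀`. -/
def TorsionOverBase (ν₀ : ValOn K Γ) (v : Polynomial K → WithTop Γ) : Prop :=
  ∀ f : Polynomial K, f ≠ 0 → ∃ m : ℕ, 0 < m ∧ ∃ a : K, a ≠ 0 ∧ m • v f = ν₀.v a

/-- `v` (a valuation on `K[x]` extending `ν₀`) is residue-transcendental: it is Krull and the
residue field extension `K(x)v ∣ Kν₀` is transcendental, i.e. there are `f, g` with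
`v f = v g` whose residue `res(f/g)` is transcendental over `Kν₀`: every polynomial over
`Kν₀` (with coefficients `res(c_i)`, not all zero) does not vanish at `res(f/g)`. -/
def ResidueTranscendental (ν₀ : ValOn K Γ) (v : Polynomial K → WithTop Γ) : Prop :=
  IsKrullVal v ∧ ∃ f g : Polynomial K, f ≠ 0 ∧ g ≠ 0 ∧ v f = v g ∧
    ∀ (n : ℕ) (c : ℕ → K), (∀ i, 0 ≤ ν₀.v (c i)) → (∃ i, i ≤ n ∧ ν₀.v (c i) = 0) →
      v (∑ i ∈ Finset.range (n + 1), Polynomial.C (c i) * f ^ i * g ^ (n - i)) = v (g ^ n)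

/-- `v` is value-transcendental: it is not Krull, or `v(K[x])/ν₀K` is not torsion. -/
def ValueTranscendental (ν₀ : ValOn K Γ) (v : Polynomial K → WithTop Γ) : Prop :=
  ¬ IsKrullVal v ∨ ¬ TorsionOverBase ν₀ v

/-- `v` is valuation-transcendental. -/
def ValuationTranscendental (ν₀ : ValOn K Γ) (v : Polynomial K → WithTop Γ) : Prop :=
  ValueTranscendental ν₀ v ∨ ResidueTranscendental ν₀ v

/-- `v` is valuation-algebraic. -/
def ValuationAlgebraic (ν₀ : ValOn K Γ) (v : Polynomial K → WithTop Γ) : Prop :=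
  ¬ ValuationTranscendental ν₀ v

end PolyDefs

open Filter Finset.HasAntidiagonal

namespace Polynomial

variable {R : Type*} [CommRing R] {Q : R[X]}

theorem degree_zero_lt_degree (hQ : Q ≠ 0) : (0 : R[X]).degree < Q.degree := by
  rw [degree_zero, bot_lt_iff_ne_bot, degree_ne_bot]
  exact hQ

theorem degree_mul_lt_degree_add_degree {a b : R[X]} (ha : a.degree < Q.degree)
    (hb : b.degree < Q.degree) : (a * b).degree < Q.degree + Q.degree := by
  refine (degree_mul_le a b).trans_lt ?_
  by_cases hb' : b.degree = ⊥
  · rw [hb', WithBot.add_bot, bot_lt_iff_ne_bot, WithBot.add_ne_bot]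
    exact ⟨ne_bot_of_gt ha, ne_bot_of_gt ha⟩
  · exact WithBot.add_lt_add_of_lt_of_le hb' ha hb.le

theorem degree_divByMonic_lt_of_lt_add [Nontrivial R] (hQ : Q.Monic) {p : R[X]}
    (hp : p.degree < Q.degree + Q.degree) : (p /ₘ Q).degree < Q.degree := by
  by_cases h : Q.degree ≤ p.degree
  · rw [← degree_add_divByMonic hQ h] at hp
    exact (WithBot.add_lt_add_iff_left (degree_ne_bot.2 hQ.ne_zero)).1 hp
  · rw [(divByMonic_eq_zero_iff hQ).2 (not_le.1 h)]
    exact degree_zero_lt_degree hQ.ne_zero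

/-- A `Q`-expansion `f = ∑ f_j Q ^ j` is encoded as `P : R[X][X]` with `P.coeff j = f_j`,
so that `f = P.eval Q`; this predicate says that `P` is one. -/
def CoeffsDegreeLT (Q : R[X]) (P : R[X][X]) : Prop :=
  ∀ j, (P.coeff j).degree < Q.degree

theorem coeffsDegreeLT_C (hQ : Q ≠ 0) {a : R[X]} (ha : a.degree < Q.degree) :
    CoeffsDegreeLT Q (C a) := by
  intro j
  rw [coeff_C]
  split_ifs
  · exact ha
  · exact degree_zero_lt_degree hQ

theorem CoeffsDegreeLT.add {A B : R[X][X]} (hA : CoeffsDegreeLT Q A)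
    (hB : CoeffsDegreeLT Q B) : CoeffsDegreeLT Q (A + B) := fun j =>
  (degree_add_le _ _).trans_lt (max_lt (hA j) (hB j))

theorem CoeffsDegreeLT.add_X_mul (hQ : Q ≠ 0) {A B : R[X][X]} (hA : CoeffsDegreeLT Q A)
    (hB : CoeffsDegreeLT Q B) : CoeffsDegreeLT Q (A + X * B) := by
  refine hA.add fun j => ?_
  cases j with
  | zero => simpa using degree_zero_lt_degree hQ
  | succ j => simpa using hB j

theorem CoeffsDegreeLT.divX {P : R[X][X]} (hP : CoeffsDegreeLT Q P) :
    CoeffsDegreeLT Q P.divX := fun j => by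
  rw [coeff_divX]
  exact hP (j + 1)

theorem CoeffsDegreeLT.degree_coeff_mul_lt {P P' : R[X][X]} (hP : CoeffsDegreeLT Q P)
    (hP' : CoeffsDegreeLT Q P') (m : ℕ) : ((P * P').coeff m).degree < Q.degree + Q.degree := by
  rw [coeff_mul]
  refine (degree_sum_le _ _).trans_lt ((Finset.sup_lt_iff ?_).2 fun p _ =>
    degree_mul_lt_degree_add_degree (hP p.1) (hP' p.2))
  exact bot_lt_iff_ne_bot.2 (WithBot.add_ne_bot.2 ⟨ne_bot_of_gt (hP 0), ne_bot_of_gt (hP 0)⟩)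

theorem eval_eq_coeff_zero_add_mul_eval_divX (P : R[X][X]) :
    P.eval Q = P.coeff 0 + Q * P.divX.eval Q := by
  nth_rewrite 1 [← X_mul_divX_add P]
  rw [eval_add, eval_mul, eval_X, eval_C, add_comm]

theorem CoeffsDegreeLT.eval_divByMonic_and_eval_modByMonic (hQ : Q.Monic) {P : R[X][X]}
    (hP : CoeffsDegreeLT Q P) : P.eval Q /ₘ Q = P.divX.eval Q ∧ P.eval Q %ₘ Q = P.coeff 0 :=
  div_modByMonic_unique _ _ hQ ⟨(eval_eq_coeff_zero_add_mul_eval_divX P).symm, hP 0⟩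

theorem CoeffsDegreeLT.eq_of_eval_eq (hQ : Q.Monic) {P P' : R[X][X]} (hP : CoeffsDegreeLT Q P)
    (hP' : CoeffsDegreeLT Q P') (h : P.eval Q = P'.eval Q) : P = P' := by
  ext j : 1
  induction j generalizing P P' with
  | zero =>
    rw [← (hP.eval_divByMonic_and_eval_modByMonic hQ).2,
      ← (hP'.eval_divByMonic_and_eval_modByMonic hQ).2, h]
  | succ j ih =>
    rw [← coeff_divX, ← coeff_divX]
    refine ih hP.divX hP'.divX ?_
    rw [← (hP.eval_divByMonic_and_eval_modByMonic hQ).1,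
      ← (hP'.eval_divByMonic_and_eval_modByMonic hQ).1, h]

theorem exists_coeffsDegreeLT_eval_eq [Nontrivial R] (hQ : Q.Monic) (hQd : 0 < Q.degree)
    (f : R[X]) : ∃ P : R[X][X], CoeffsDegreeLT Q P ∧ P.eval Q = f := by
  induction h : f.natDegree using Nat.strong_induction_on generalizing f with
  | _ n ih =>
    obtain ⟨P, hP, hPf⟩ : ∃ P : R[X][X], CoeffsDegreeLT Q P ∧ P.eval Q = f /ₘ Q := by
      by_cases hf : f /ₘ Q = 0
      · exact ⟨0, fun j => by simpa using degree_zero_lt_degree hQ.ne_zero, by simp [hf]⟩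
      · have hf : 0 < f.natDegree := natDegree_pos_iff_degree_pos.2 <|
          hQd.trans_le (not_lt.1 ((divByMonic_eq_zero_iff hQ).not.1 hf))
        have hQn : 0 < Q.natDegree := natDegree_pos_iff_degree_pos.2 hQd
        exact ih _ (by rw [← h, natDegree_divByMonic f hQ]; omega) _ rfl
    exact ⟨C (f %ₘ Q) + X * P,
      (coeffsDegreeLT_C hQ.ne_zero (degree_modByMonic_lt f hQ)).add_X_mul hQ.ne_zero hP,
      by simp [hPf, modByMonic_add_div]⟩

theorem exists_coeff_eq_apply_coeff (φ : R[X] → R[X]) (hφ : φ 0 = 0) (H : R[X][X]) :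
    ∃ A : R[X][X], ∀ m, A.coeff m = φ (H.coeff m) :=
  ⟨∑ m ∈ H.support, monomial m (φ (H.coeff m)), fun m => by
    simp only [finsetSum_coeff, coeff_monomial, Finset.sum_ite_eq']
    split_ifs with hm
    · rfl
    · rw [notMem_support_iff.1 hm, hφ]⟩

/-- Carrying: `A + X * B` is then the `Q`-expansion of `H.eval Q`. -/
theorem exists_carry [Nontrivial R] (hQ : Q.Monic) {H : R[X][X]}
    (hH : ∀ m, (H.coeff m).degree < Q.degree + Q.degree) :
    ∃ A B : R[X][X], CoeffsDegreeLT Q A ∧ CoeffsDegreeLT Q B ∧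
      ∀ m, H.coeff m = A.coeff m + B.coeff m * Q := by
  obtain ⟨A, hA⟩ := exists_coeff_eq_apply_coeff (· %ₘ Q) (zero_modByMonic Q) H
  obtain ⟨B, hB⟩ := exists_coeff_eq_apply_coeff (· /ₘ Q) (zero_divByMonic Q) H
  refine ⟨A, B, fun m => ?_, fun m => ?_, fun m => ?_⟩
  · rw [hA]
    exact degree_modByMonic_lt _ hQ
  · rw [hB]
    exact degree_divByMonic_lt_of_lt_add hQ (hH m)
  · rw [hA, hB, mul_comm, modByMonic_add_div]

theorem eval_add_X_mul_eq_of_coeff_eq {A B H : R[X][X]}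
    (h : ∀ m, H.coeff m = A.coeff m + B.coeff m * Q) : (A + X * B).eval Q = H.eval Q := by
  have : H = A + B * C Q := by
    ext m : 1
    rw [h, coeff_add, coeff_mul_C]
  rw [this, eval_add, eval_add, eval_mul, eval_mul, eval_X, eval_C, mul_comm]

noncomputable def qExpansion (Q f : R[X]) : R[X][X] :=
  Classical.epsilon fun P => CoeffsDegreeLT Q P ∧ P.eval Q = f

theorem CoeffsDegreeLT.qExpansion_eval (hQ : Q.Monic) {P : R[X][X]} (hP : CoeffsDegreeLT Q P) :
    qExpansion Q (P.eval Q) = P :=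
  have h := Classical.epsilon_spec (p := fun P' => CoeffsDegreeLT Q P' ∧ P'.eval Q = P.eval Q)
    ⟨P, hP, rfl⟩
  h.1.eq_of_eval_eq hQ hP h.2

theorem qExpansion_spec [Nontrivial R] (hQ : Q.Monic) (hQd : 0 < Q.degree) (f : R[X]) :
    CoeffsDegreeLT Q (qExpansion Q f) ∧ (qExpansion Q f).eval Q = f :=
  Classical.epsilon_spec (exists_coeffsDegreeLT_eval_eq hQ hQd f)

end Polynomial

namespace ValOn

variable {R : Type*} [CommRing R] {Γ : Type*} [AddCommGroup Γ] [LinearOrder Γ]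
  [IsOrderedAddMonoid Γ] (w : ValOn R Γ)

theorem v_add_eq_left {x y : R} (h : w.v x < w.v y) : w.v (x + y) = w.v x := by
  refine le_antisymm ?_ (min_eq_left h.le ▸ w.min_le_v_add x y)
  by_contra! hlt
  have := w.min_le_v_add (x + y) (-y)
  rw [add_neg_cancel_right, w.v_neg] at this
  exact this.not_gt (lt_min hlt h)

theorem v_add_mem {U : Set (WithTop Γ)} (hU : IsUpperSet U) {x y : R} (hx : w.v x ∈ U)
    (hy : w.v y ∈ U) : w.v (x + y) ∈ U :=
  hU (w.min_le_v_add x y) (by rcases min_choice (w.v x) (w.v y) with h | h <;> rwa [h])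

theorem v_sum_mem {ι : Type*} {U : Set (WithTop Γ)} (hU : IsUpperSet U) (htop : ⊤ ∈ U)
    (s : Finset ι) (x : ι → R) (h : ∀ p ∈ s, w.v (x p) ∈ U) : w.v (∑ p ∈ s, x p) ∈ U := by
  classical
  induction s using Finset.induction_on with
  | empty => rwa [Finset.sum_empty, w.v_zero]
  | insert p s hp ih =>
    rw [Finset.sum_insert hp]
    exact w.v_add_mem hU (h p (Finset.mem_insert_self p s))
      (ih fun q hq => h q (Finset.mem_insert_of_mem hq))

theorem v_sum_eq_of_lt {ι : Type*} {s : Finset ι} {p₀ : ι} (hp₀ : p₀ ∈ s) (x : ι → R)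
    (h : ∀ p ∈ s, p ≠ p₀ → w.v (x p₀) < w.v (x p)) : w.v (∑ p ∈ s, x p) = w.v (x p₀) := by
  classical
  rw [← Finset.add_sum_erase s x hp₀]
  have h' : ∀ p ∈ s.erase p₀, w.v (x p₀) < w.v (x p) := fun p hp =>
    h p (Finset.mem_of_mem_erase hp) (Finset.ne_of_mem_erase hp)
  by_cases htop : w.v (x p₀) = ⊤
  · have : s.erase p₀ = ∅ := Finset.eq_empty_of_forall_notMem fun p hp =>
      (htop ▸ h' p hp).not_ge le_top
    rw [this, Finset.sum_empty, add_zero]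
  · exact w.v_add_eq_left (w.lt_v_sum htop _ _ h')

end ValOn


section LimitAugmentation

variable {K : Type*} [Field K] {Γ : Type*} [AddCommGroup Γ] [LinearOrder Γ]
  [IsOrderedAddMonoid Γ] {I : Type*} [Preorder I] {ν : I → ValOn K[X] Γ} {γ : WithTop Γ}

variable (ν) in
/-- `𝔳(f)` for `𝔳`-stable `f`, with the junk value `⊤` on unstable polynomials. -/
noncomputable def stableVal (f : K[X]) : WithTop Γ :=
  open Classical in
  if h : ∃ c, ∀ᶠ i in atTop, (ν i).v f = c then h.choose else ⊤

variable (ν γ) in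
noncomputable def augVal (P : K[X][X]) : WithTop Γ :=
  P.support.inf fun j => stableVal ν (P.coeff j) + j • γ

theorem exists_stableVal_add_nsmul_eq_augVal {P : K[X][X]} (h : augVal ν γ P ≠ ⊤) :
    ∃ j, stableVal ν (P.coeff j) + j • γ = augVal ν γ P := by
  obtain ⟨j, -, hj⟩ := Finset.exists_mem_eq_inf P.support
    (Finset.nonempty_iff_ne_empty.2 fun he => h (by rw [augVal, he, Finset.inf_empty]))
    fun j => stableVal ν (P.coeff j) + j • γ
  exact ⟨j, hj.symm⟩

variable [IsDirectedOrder I] [Nonempty I] {Q a b : K[X]} {P P' A B : K[X][X]}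

theorem stable_iff_exists_eventually_eq {f : K[X]} :
    Stable ν f ↔ ∃ c, ∀ᶠ i in atTop, (ν i).v f = c := by
  refine ⟨fun ⟨i, hi⟩ => ⟨_, eventually_atTop.2 ⟨i, hi⟩⟩, fun ⟨c, hc⟩ => ?_⟩
  obtain ⟨i, hi⟩ := eventually_atTop.1 hc
  exact ⟨i, fun j hj => (hi j hj).trans (hi i le_rfl).symm⟩

theorem Stable.eventually_eq {f : K[X]} (hf : Stable ν f) :
    ∀ᶠ i in atTop, (ν i).v f = stableVal ν f := by
  have h := stable_iff_exists_eventually_eq.1 hf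
  rw [stableVal, dif_pos h]
  exact h.choose_spec

theorem stableVal_eq_of_eventually_eq {f : K[X]} {c : WithTop Γ}
    (h : ∀ᶠ i in atTop, (ν i).v f = c) : stableVal ν f = c := by
  obtain ⟨i, hi, hi'⟩ :=
    ((Stable.eventually_eq (stable_iff_exists_eventually_eq.2 ⟨c, h⟩)).and h).exists
  exact hi.symm.trans hi'

theorem stable_of_eventually_eq {f : K[X]} {c : WithTop Γ} (h : ∀ᶠ i in atTop, (ν i).v f = c) :
    Stable ν f :=
  stable_iff_exists_eventually_eq.2 ⟨c, h⟩

theorem stableVal_of_not_stable {f : K[X]} (hf : ¬ Stable ν f) : stableVal ν f = ⊤ :=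
  dif_neg (mt stable_iff_exists_eventually_eq.2 hf)

theorem stableVal_zero : stableVal ν 0 = ⊤ :=
  stableVal_eq_of_eventually_eq (.of_forall fun i => (ν i).v_zero)

theorem stableVal_C {ν₀ : ValOn K Γ} (hext : ∀ i a, (ν i).v (C a) = ν₀.v a) (a : K) :
    stableVal ν (C a) = ν₀.v a :=
  stableVal_eq_of_eventually_eq (.of_forall fun i => hext i a)

theorem Stable.eventually_v_mul {f g : K[X]} (hf : Stable ν f) (hg : Stable ν g) :
    ∀ᶠ i in atTop, (ν i).v (f * g) = stableVal ν f + stableVal ν g :=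
  (hf.eventually_eq.and hg.eventually_eq).mono fun i h => by rw [(ν i).v_mul, h.1, h.2]

theorem min_stableVal_le_add {f g : K[X]} (hf : Stable ν f) (hg : Stable ν g) :
    min (stableVal ν f) (stableVal ν g) ≤ stableVal ν (f + g) := by
  by_cases hfg : Stable ν (f + g)
  · obtain ⟨i, ⟨hfi, hgi⟩, hfgi⟩ :=
      ((hf.eventually_eq.and hg.eventually_eq).and hfg.eventually_eq).exists
    rw [← hfi, ← hgi, ← hfgi]
    exact (ν i).min_le_v_add f g
  · rw [stableVal_of_not_stable hfg]
    exact le_top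

theorem stableVal_add_eq_of_lt {f g : K[X]} (hf : Stable ν f) (hg : Stable ν g)
    (h : stableVal ν f < stableVal ν g) : stableVal ν (f + g) = stableVal ν f :=
  stableVal_eq_of_eventually_eq <| (hf.eventually_eq.and hg.eventually_eq).mono fun i hi => by
    rw [(ν i).v_add_eq_left (by rw [hi.1, hi.2]; exact h), hi.1]

theorem stable_of_eventually_add_v_eq {b d : WithTop Γ} (hb : b ≠ ⊤)
    (h : ∀ᶠ i in atTop, b + (ν i).v Q = d) : Stable ν Q := by
  obtain ⟨i₀, hi₀⟩ := h.exists
  exact stable_of_eventually_eq (h.mono fun i hi => WithTop.add_left_cancel hb (hi.trans hi₀.symm))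

/-- Otherwise `b * Q` would eventually take the constant value `𝔳(a)`, making `Q` stable. -/
theorem stableVal_mem_of_eventually_v_add_mul_mem (hQ : ¬ Stable ν Q) (ha : Stable ν a)
    (hb : Stable ν b) {U : Set (WithTop Γ)} (hU : IsUpperSet U)
    (h : ∀ᶠ i in atTop, (ν i).v (a + b * Q) ∈ U) : stableVal ν a ∈ U := by
  by_contra ha'
  have hlt : ∀ u ∈ U, stableVal ν a < u := fun u hu => lt_of_not_ge fun hle => ha' (hU hle hu)
  have hbQ : ∀ᶠ i in atTop, stableVal ν b + (ν i).v Q = stableVal ν a := by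
    filter_upwards [h, ha.eventually_eq, hb.eventually_eq] with i hi hai hbi
    have := (ν i).v_add_eq_left (x := -a) (y := a + b * Q)
      (by rw [(ν i).v_neg, hai]; exact hlt _ hi)
    rwa [neg_add_cancel_left, (ν i).v_neg, (ν i).v_mul, hbi, hai] at this
  refine hQ (stable_of_eventually_add_v_eq (fun hb' => ?_) hbQ)
  obtain ⟨i, hi, hbi⟩ := (h.and hbQ).exists
  rw [hb', top_add] at hbi
  exact ha' (hbi ▸ hU le_top hi)

theorem stableVal_add_mem_of_eventually_v_add_mul_mem (hQ : ¬ Stable ν Q)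
    (hγ : ∀ i, (ν i).v Q ≤ γ) (ha : Stable ν a) (hb : Stable ν b) {U : Set (WithTop Γ)}
    (hU : IsUpperSet U) (h : ∀ᶠ i in atTop, (ν i).v (a + b * Q) ∈ U) :
    stableVal ν b + γ ∈ U := by
  obtain ⟨i, hi, hai, hbi⟩ := (h.and (ha.eventually_eq.and hb.eventually_eq)).exists
  have hbQ := (ν i).v_add_mem hU hi (y := -a)
    (by rw [(ν i).v_neg, hai]; exact stableVal_mem_of_eventually_v_add_mul_mem hQ ha hb hU h)
  rw [add_neg_cancel_comm, (ν i).v_mul, hbi] at hbQ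
  exact hU (add_le_add le_rfl (hγ i)) hbQ

theorem stableVal_eq_of_eventually_v_add_mul_eq (hQ : ¬ Stable ν Q) (ha : Stable ν a)
    (hb : Stable ν b) {T : WithTop Γ} (h : ∀ᶠ i in atTop, (ν i).v (a + b * Q) = T) :
    stableVal ν a = T := by
  refine le_antisymm (not_lt.1 fun hlt => hQ ?_)
    (stableVal_mem_of_eventually_v_add_mul_mem hQ ha hb (isUpperSet_Ici T)
      (h.mono fun i hi => hi.ge))
  have hbQ : ∀ᶠ i in atTop, stableVal ν b + (ν i).v Q = T := by
    filter_upwards [h, ha.eventually_eq, hb.eventually_eq] with i hi hai hbi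
    have := (ν i).v_add_eq_left (x := a + b * Q) (y := -a)
      (by rw [hi, (ν i).v_neg, hai]; exact hlt)
    rwa [add_neg_cancel_comm, hi, (ν i).v_mul, hbi] at this
  refine stable_of_eventually_add_v_eq (fun hb' => ?_) hbQ
  obtain ⟨i, hi⟩ := hbQ.exists
  rw [hb', top_add] at hi
  exact (hi ▸ hlt).ne_top rfl

theorem augVal_le (P : K[X][X]) (j : ℕ) : augVal ν γ P ≤ stableVal ν (P.coeff j) + j • γ := by
  by_cases hj : j ∈ P.support
  · exact Finset.inf_le hj
  · rw [notMem_support_iff.1 hj, stableVal_zero, top_add]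
    exact le_top

theorem le_augVal_iff {P : K[X][X]} {M : WithTop Γ} :
    M ≤ augVal ν γ P ↔ ∀ j, M ≤ stableVal ν (P.coeff j) + j • γ :=
  ⟨fun h j => h.trans (augVal_le P j), fun h => Finset.le_inf fun j _ => h j⟩

theorem augVal_eq_inf {P : K[X][X]} {s : Finset ℕ} (hs : P.support ⊆ s) :
    augVal ν γ P = s.inf fun j => stableVal ν (P.coeff j) + j • γ :=
  le_antisymm (Finset.le_inf fun j _ => augVal_le P j) (Finset.inf_mono hs)

theorem augVal_C (c : K[X]) : augVal ν γ (C c) = stableVal ν c := by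
  rw [augVal_eq_inf (support_C_subset c), Finset.inf_singleton, coeff_C_zero, zero_smul,
    add_zero]

theorem min_augVal_le_add {P P' : K[X][X]} (hP : ∀ j, Stable ν (P.coeff j))
    (hP' : ∀ j, Stable ν (P'.coeff j)) :
    min (augVal ν γ P) (augVal ν γ P') ≤ augVal ν γ (P + P') :=
  le_augVal_iff.2 fun j => calc
    _ ≤ min (stableVal ν (P.coeff j) + j • γ) (stableVal ν (P'.coeff j) + j • γ) :=
      min_le_min (augVal_le P j) (augVal_le P' j)
    _ ≤ stableVal ν ((P + P').coeff j) + j • γ := by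
      rw [min_add_add_right, coeff_add]
      gcongr
      exact min_stableVal_le_add (hP j) (hP' j)

theorem stable_coeff_X_mul {B : K[X][X]} (hB : ∀ j, Stable ν (B.coeff j)) (m : ℕ) :
    Stable ν ((X * B).coeff m) := by
  cases m with
  | zero => exact coeff_X_mul_zero B ▸ stable_of_eventually_eq (.of_forall fun i => (ν i).v_zero)
  | succ m => exact (coeff_X_mul B m).symm ▸ hB m

theorem eventually_v_coeff_mul_mem {P P' : K[X][X]} (hP : ∀ j, Stable ν (P.coeff j))
    (hP' : ∀ j, Stable ν (P'.coeff j)) {U : Set (WithTop Γ)} (hU : IsUpperSet U) (htop : ⊤ ∈ U)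
    {m : ℕ} (h : ∀ p ∈ antidiagonal m,
      stableVal ν (P.coeff p.1) + stableVal ν (P'.coeff p.2) ∈ U) :
    ∀ᶠ i in atTop, (ν i).v ((P * P').coeff m) ∈ U := by
  rw [coeff_mul]
  filter_upwards [(eventually_all_finset (antidiagonal m)).2 fun p _ =>
    (hP p.1).eventually_v_mul (hP' p.2)] with i hi
  exact (ν i).v_sum_mem hU htop _ _ fun p hp => (hi p hp).symm ▸ h p hp

theorem eventually_v_coeff_mul_eq (hP : ∀ j, Stable ν (P.coeff j))
    (hP' : ∀ j, Stable ν (P'.coeff j)) {j₀ k₀ : ℕ} (h : ∀ j k, j + k = j₀ + k₀ → j ≠ j₀ →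
      stableVal ν (P.coeff j₀) + stableVal ν (P'.coeff k₀) <
        stableVal ν (P.coeff j) + stableVal ν (P'.coeff k)) :
    ∀ᶠ i in atTop, (ν i).v ((P * P').coeff (j₀ + k₀)) =
      stableVal ν (P.coeff j₀) + stableVal ν (P'.coeff k₀) := by
  have hmem : (j₀, k₀) ∈ antidiagonal (j₀ + k₀) := mem_antidiagonal.2 rfl
  rw [coeff_mul]
  filter_upwards [(eventually_all_finset (antidiagonal (j₀ + k₀))).2 fun p _ =>
    (hP p.1).eventually_v_mul (hP' p.2)] with i hi
  rw [(ν i).v_sum_eq_of_lt hmem _ fun p hp hne => ?_, hi _ hmem]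
  obtain ⟨j, k⟩ := p
  rw [mem_antidiagonal] at hp
  rw [hi _ hmem, hi _ (mem_antidiagonal.2 hp)]
  exact h j k hp fun hj => hne (by simp only [Prod.mk.injEq]; omega)

theorem augVal_add_le_augVal_carry (hQ : ¬ Stable ν Q) (hγ : ∀ i, (ν i).v Q ≤ γ)
    (hP : ∀ j, Stable ν (P.coeff j)) (hP' : ∀ j, Stable ν (P'.coeff j))
    (hA : ∀ j, Stable ν (A.coeff j)) (hB : ∀ j, Stable ν (B.coeff j))
    (hcarry : ∀ m, (P * P').coeff m = A.coeff m + B.coeff m * Q) :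
    augVal ν γ P + augVal ν γ P' ≤ augVal ν γ (A + X * B) := by
  set M := augVal ν γ P + augVal ν γ P'
  have key : ∀ m, M ≤ stableVal ν (A.coeff m) + m • γ ∧
      M ≤ stableVal ν (B.coeff m) + γ + m • γ := by
    intro m
    have hU : IsUpperSet {y : WithTop Γ | M ≤ y + m • γ} := fun y z hyz hy =>
      hy.trans (add_le_add_left hyz _)
    have h := eventually_v_coeff_mul_mem hP hP' hU (by simp) (m := m) fun p hp => calc
      M ≤ (stableVal ν (P.coeff p.1) + p.1 • γ) + (stableVal ν (P'.coeff p.2) + p.2 • γ) :=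
        add_le_add (augVal_le P p.1) (augVal_le P' p.2)
      _ = stableVal ν (P.coeff p.1) + stableVal ν (P'.coeff p.2) + m • γ := by
        rw [← mem_antidiagonal.1 hp, add_nsmul, add_add_add_comm]
    simp only [hcarry] at h
    exact ⟨stableVal_mem_of_eventually_v_add_mul_mem hQ (hA m) (hB m) hU h,
      stableVal_add_mem_of_eventually_v_add_mul_mem hQ hγ (hA m) (hB m) hU h⟩
  refine le_augVal_iff.2 fun m => ?_
  cases m with
  | zero => simpa using (key 0).1
  | succ m =>
    calc M ≤ min (stableVal ν (A.coeff (m + 1)) + (m + 1) • γ)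
          (stableVal ν (B.coeff m) + γ + m • γ) := le_min (key _).1 (key m).2
      _ = min (stableVal ν (A.coeff (m + 1))) (stableVal ν (B.coeff m)) + (m + 1) • γ := by
        rw [add_assoc, ← succ_nsmul', min_add_add_right]
      _ ≤ _ := by
        rw [coeff_add, coeff_X_mul]
        gcongr
        exact min_stableVal_le_add (hA _) (hB _)

/-- The coefficient of index `j₀ + k₀` attains the bound: its low part has the exact value
`𝔳(f_{j₀}) + 𝔳(g_{k₀})`, and the carry from index `j₀ + k₀ - 1` is strictly larger. -/
theorem augVal_carry_le_of_forall_lt (hQ : ¬ Stable ν Q) (hγ : ∀ i, (ν i).v Q ≤ γ)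
    (hP : ∀ j, Stable ν (P.coeff j)) (hP' : ∀ j, Stable ν (P'.coeff j))
    (hA : ∀ j, Stable ν (A.coeff j)) (hB : ∀ j, Stable ν (B.coeff j))
    (hcarry : ∀ m, (P * P').coeff m = A.coeff m + B.coeff m * Q) {j₀ k₀ : ℕ}
    (hM : augVal ν γ P + augVal ν γ P' ≠ ⊤)
    (hMT : augVal ν γ P + augVal ν γ P' =
      stableVal ν (P.coeff j₀) + stableVal ν (P'.coeff k₀) + (j₀ + k₀) • γ)
    (hgt : ∀ j k, j < j₀ ∨ k < k₀ → augVal ν γ P + augVal ν γ P' <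
      stableVal ν (P.coeff j) + stableVal ν (P'.coeff k) + (j + k) • γ) :
    augVal ν γ (A + X * B) ≤ augVal ν γ P + augVal ν γ P' := by
  set M := augVal ν γ P + augVal ν γ P'
  set T := stableVal ν (P.coeff j₀) + stableVal ν (P'.coeff k₀)
  have hlow : stableVal ν (A.coeff (j₀ + k₀)) = T := by
    refine stableVal_eq_of_eventually_v_add_mul_eq hQ (hA _) (hB (j₀ + k₀)) ?_
    rw [← hcarry]
    refine eventually_v_coeff_mul_eq hP hP' fun j k hjk hj => ?_
    have := hgt j k (by omega)
    rw [hMT, hjk] at this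
    exact lt_of_add_lt_add_right this
  have hcarried : T < stableVal ν ((X * B).coeff (j₀ + k₀)) := by
    cases hm : j₀ + k₀ with
    | zero =>
      rw [coeff_X_mul_zero, stableVal_zero, lt_top_iff_ne_top]
      exact fun hT => hM (by rw [hMT, hT, top_add])
    | succ m =>
      have hU : IsUpperSet {y : WithTop Γ | M < y + m • γ} := fun y z hyz hy =>
        hy.trans_le (add_le_add_left hyz _)
      have h := eventually_v_coeff_mul_mem hP hP' hU (by simpa using lt_top_iff_ne_top.2 hM)
        (m := m) fun p hp => by
          have := hgt p.1 p.2 (by rw [mem_antidiagonal] at hp; omega)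
          rwa [mem_antidiagonal.1 hp] at this
      simp only [hcarry] at h
      have := stableVal_add_mem_of_eventually_v_add_mul_mem hQ hγ (hA m) (hB m) hU h
      rw [Set.mem_ofPred_eq, add_assoc, ← succ_nsmul', hMT, hm] at this
      rw [coeff_X_mul]
      exact lt_of_add_lt_add_right this
  calc augVal ν γ (A + X * B) ≤ stableVal ν ((A + X * B).coeff (j₀ + k₀)) + (j₀ + k₀) • γ :=
        augVal_le _ _
    _ = M := by
      rw [coeff_add, stableVal_add_eq_of_lt (hA _) (stable_coeff_X_mul hB _) (hlow ▸ hcarried),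
        hlow, hMT]

theorem augVal_carry_le_augVal_add (hQ : ¬ Stable ν Q) (hγ : ∀ i, (ν i).v Q ≤ γ)
    (hP : ∀ j, Stable ν (P.coeff j)) (hP' : ∀ j, Stable ν (P'.coeff j))
    (hA : ∀ j, Stable ν (A.coeff j)) (hB : ∀ j, Stable ν (B.coeff j))
    (hcarry : ∀ m, (P * P').coeff m = A.coeff m + B.coeff m * Q) :
    augVal ν γ (A + X * B) ≤ augVal ν γ P + augVal ν γ P' := by
  classical
  by_cases hM : augVal ν γ P + augVal ν γ P' = ⊤
  · exact hM ▸ le_top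
  obtain ⟨hPtop, hP'top⟩ := WithTop.add_ne_top.1 hM
  have hex := exists_stableVal_add_nsmul_eq_augVal hPtop
  have hex' := exists_stableVal_add_nsmul_eq_augVal hP'top
  refine augVal_carry_le_of_forall_lt hQ hγ hP hP' hA hB hcarry hM (j₀ := Nat.find hex)
    (k₀ := Nat.find hex') ?_ fun j k hjk => ?_
  · rw [add_nsmul, add_add_add_comm, Nat.find_spec hex, Nat.find_spec hex']
  rw [add_nsmul, add_add_add_comm]
  rcases hjk with hj | hk
  · exact WithTop.add_lt_add_of_lt_of_le hP'top
      ((augVal_le P j).lt_of_ne (Ne.symm (Nat.find_min hex hj))) (augVal_le P' k)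
  · exact WithTop.add_lt_add_of_le_of_lt hPtop (augVal_le P j)
      ((augVal_le P' k).lt_of_ne (Ne.symm (Nat.find_min hex' hk)))

theorem augVal_qExpansion_of_degree_lt (hQ : Q.Monic) {f : K[X]} (hf : f.degree < Q.degree) :
    augVal ν γ (qExpansion Q f) = stableVal ν f := by
  rw [← eval_C (x := Q) (a := f), (coeffsDegreeLT_C hQ.ne_zero hf).qExpansion_eval hQ, eval_C,
    augVal_C]

theorem augVal_qExpansion_mul (hQ : Q.Monic) (hQd : 0 < Q.degree) (hQs : ¬ Stable ν Q)
    (hlow : ∀ f : K[X], f.degree < Q.degree → Stable ν f) (hγ : ∀ i, (ν i).v Q ≤ γ)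
    (f g : K[X]) :
    augVal ν γ (qExpansion Q (f * g)) =
      augVal ν γ (qExpansion Q f) + augVal ν γ (qExpansion Q g) := by
  obtain ⟨hPf, hf⟩ := qExpansion_spec hQ hQd f
  obtain ⟨hPg, hg⟩ := qExpansion_spec hQ hQd g
  obtain ⟨A, B, hA, hB, hcarry⟩ := exists_carry hQ (hPf.degree_coeff_mul_lt hPg)
  have hfg : qExpansion Q (f * g) = A + X * B := by
    rw [← hf, ← hg, ← eval_mul, ← eval_add_X_mul_eq_of_coeff_eq hcarry,
      (hA.add_X_mul hQ.ne_zero hB).qExpansion_eval hQ]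
  have hst : ∀ {P : K[X][X]}, CoeffsDegreeLT Q P → ∀ j, Stable ν (P.coeff j) :=
    fun hP j => hlow _ (hP j)
  rw [hfg]
  exact le_antisymm
    (augVal_carry_le_augVal_add hQs hγ (hst hPf) (hst hPg) (hst hA) (hst hB) hcarry)
    (augVal_add_le_augVal_carry hQs hγ (hst hPf) (hst hPg) (hst hA) (hst hB) hcarry)

theorem min_augVal_qExpansion_le_add (hQ : Q.Monic) (hQd : 0 < Q.degree)
    (hlow : ∀ f : K[X], f.degree < Q.degree → Stable ν f) (f g : K[X]) :
    min (augVal ν γ (qExpansion Q f)) (augVal ν γ (qExpansion Q g)) ≤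
      augVal ν γ (qExpansion Q (f + g)) := by
  obtain ⟨hPf, hf⟩ := qExpansion_spec hQ hQd f
  obtain ⟨hPg, hg⟩ := qExpansion_spec hQ hQd g
  have hfg := (hPf.add hPg).qExpansion_eval hQ
  rw [eval_add, hf, hg] at hfg
  rw [hfg]
  exact min_augVal_le_add (fun j => hlow _ (hPf j)) (fun j => hlow _ (hPg j))

variable (γ) in
noncomputable def limitAugmentation (hQ : Q.Monic) (hQd : 0 < Q.degree) (hQs : ¬ Stable ν Q)
    (hlow : ∀ f : K[X], f.degree < Q.degree → Stable ν f) (hγ : ∀ i, (ν i).v Q ≤ γ) :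
    ValOn K[X] Γ where
  v f := augVal ν γ (qExpansion Q f)
  v_zero := by
    rw [augVal_qExpansion_of_degree_lt hQ (degree_zero_lt_degree hQ.ne_zero)]
    exact stableVal_eq_of_eventually_eq (.of_forall fun i => (ν i).v_zero)
  v_one := by
    rw [augVal_qExpansion_of_degree_lt hQ (degree_one.trans_lt hQd)]
    exact stableVal_eq_of_eventually_eq (.of_forall fun i => (ν i).v_one)
  v_mul := augVal_qExpansion_mul hQ hQd hQs hlow hγ
  min_le_v_add := min_augVal_qExpansion_le_add hQ hQd hlow

theorem limitAugmentation_v_sum (hQ : Q.Monic) (hQd : 0 < Q.degree) (hQs : ¬ Stable ν Q)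
    (hlow : ∀ f : K[X], f.degree < Q.degree → Stable ν f) (hγ : ∀ i, (ν i).v Q ≤ γ)
    {c : ℕ → K[X]} (hc : ∀ j, (c j).degree < Q.degree) (s : Finset ℕ) :
    (limitAugmentation γ hQ hQd hQs hlow hγ).v (∑ j ∈ s, c j * Q ^ j) =
      s.inf fun j => stableVal ν (c j) + j • γ := by
  classical
  set P : K[X][X] := ∑ j ∈ s, monomial j (c j)
  have hcoeff : ∀ j, P.coeff j = if j ∈ s then c j else 0 := fun j => by
    simp only [P, finsetSum_coeff, coeff_monomial, Finset.sum_ite_eq']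
  have hP : CoeffsDegreeLT Q P := fun j => by
    rw [hcoeff]
    split_ifs
    exacts [hc j, degree_zero_lt_degree hQ.ne_zero]
  have hPs : P.support ⊆ s := fun j hj => by
    by_contra hjs
    exact mem_support_iff.1 hj (by rw [hcoeff, if_neg hjs])
  have hPeval : P.eval Q = ∑ j ∈ s, c j * Q ^ j := by
    simp only [P, eval_finsetSum, eval_monomial]
  show augVal ν γ (qExpansion Q _) = _
  rw [← hPeval, hP.qExpansion_eval hQ, augVal_eq_inf hPs]
  exact Finset.inf_congr rfl fun j hj => by rw [hcoeff, if_pos hj]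

end LimitAugmentation

theorem limit_truncation_is_valuation_general
    {K : Type*} [Field K] {Γ : Type*} [AddCommGroup Γ] [LinearOrder Γ] [IsOrderedAddMonoid Γ]
    {I : Type*} [LinearOrder I] [Nonempty I]
    (ν₀ : ValOn K Γ) (ν : I → ValOn (Polynomial K) Γ)
    (hext : ∀ (i : I) (a : K), (ν i).v (Polynomial.C a) = ν₀.v a)
    (Q : Polynomial K) (hQmonic : Q.Monic) (hQns : ¬ Stable ν Q)
    (hQmin : ∀ g : Polynomial K, ¬ Stable ν g → Q.degree ≤ g.degree)
    (γ : WithTop Γ) (hγ : ∀ i : I, (ν i).v Q < γ) :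
    ∃ μ : ValOn (Polynomial K) Γ,
      (∀ a : K, μ.v (Polynomial.C a) = ν₀.v a) ∧
      (∀ (f : Polynomial K) (r : ℕ) (c : ℕ → Polynomial K),
        f = ∑ j ∈ Finset.range (r + 1), c j * Q ^ j →
        (∀ j : ℕ, (c j).degree < Q.degree) →
        ∃ i₀ : I, ∀ i : I, i₀ ≤ i →
          μ.v f = (Finset.range (r + 1)).inf' Finset.nonempty_range_add_one
            (fun j => (ν i).v (c j) + j • γ)) := by
  have hlow : ∀ f : K[X], f.degree < Q.degree → Stable ν f := fun f hf =>
    by_contra fun hf' => (hQmin f hf').not_gt hf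
  have hQd : 0 < Q.degree := by
    by_contra! hQ0
    exact hQns <| stable_of_eventually_eq <|
      .of_forall fun i => by rw [eq_C_of_degree_le_zero hQ0, hext]
  refine ⟨limitAugmentation γ hQmonic hQd hQns hlow fun i => (hγ i).le, fun a => ?_,
    fun f r c hf hc => ?_⟩
  · exact (augVal_qExpansion_of_degree_lt hQmonic (degree_C_le.trans_lt hQd)).trans
      (stableVal_C hext a)
  · obtain ⟨i₀, hi₀⟩ := eventually_atTop.1 <| (eventually_all_finset (Finset.range (r + 1))).2
      fun j _ => (hlow _ (hc j)).eventually_eq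
    refine ⟨i₀, fun i hi => ?_⟩
    rw [hf, limitAugmentation_v_sum hQmonic hQd hQns hlow _ hc, Finset.inf'_eq_inf]
    exact Finset.inf_congr rfl fun j hj => by rw [hi₀ i hi j hj]

/-- In the third case (no maximal element, `Q` monic of smallest degree
not `𝔳`-stable, `γ > ν_i(Q)` for all `i`), the map
`μ(∑ f_j Q^j) = min_j (𝔳(f_j) + jγ)` is a valuation on `K[x]` with `μ|_K = ν₀`.
(Here `𝔳(f_j)`, the stable value of `f_j`, is rendered as `ν_i(f_j)` for all
sufficiently large `i`.) -/
theorem limit_truncation_is_valuation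
    {K : Type*} [Field K] {Γ : Type*} [AddCommGroup Γ] [LinearOrder Γ] [IsOrderedAddMonoid Γ]
    {I : Type*} [LinearOrder I] [Nonempty I]
    (ν₀ : ValOn K Γ) (ν : I → ValOn (Polynomial K) Γ)
    (hext : ∀ (i : I) (a : K), (ν i).v (Polynomial.C a) = ν₀.v a)
    (hmono : ∀ i j : I, i ≤ j → ∀ f : Polynomial K, (ν i).v f ≤ (ν j).v f)
    (hstrict : ∀ i j : I, i < j → ∃ f : Polynomial K, (ν i).v f < (ν j).v f)
    (hnomax : ∀ i : I, ∃ j : I, i < j)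
    (Q : Polynomial K) (hQmonic : Q.Monic) (hQns : ¬ Stable ν Q)
    (hQmin : ∀ g : Polynomial K, ¬ Stable ν g → Q.degree ≤ g.degree)
    (γ : WithTop Γ) (hγ : ∀ i : I, (ν i).v Q < γ) :
    ∃ μ : ValOn (Polynomial K) Γ,
      (∀ a : K, μ.v (Polynomial.C a) = ν₀.v a) ∧
      (∀ (f : Polynomial K) (r : ℕ) (c : ℕ → Polynomial K),
        f = ∑ j ∈ Finset.range (r + 1), c j * Q ^ j →
        (∀ j : ℕ, (c j).degree < Q.degree) →
        ∃ i₀ : I, ∀ i : I, i₀ ≤ i →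
          μ.v f = (Finset.range (r + 1)).inf' Finset.nonempty_range_add_one
            (fun j => (ν i).v (c j) + j • γ)) :=
  limit_truncation_is_valuation_general ν₀ ν hext Q hQmonic hQns hQmin γ hγ
end

section
/- Let 𝔳 = {ν_i}_{i∈I} be a totally ordered set in V with no maximal element such that at least one polynomial is not 𝔳-stable. Let Q be a monic polynomial of smallest degree that is not 𝔳-stable, take γ ∈ Γ ∪ {∞} with γ > ν_i(Q) for every i ∈ I, and let μ be the valuation defined by μ(f_0 + f_1 Q + … + f_r Q^r) = min_{0≤j≤r} {𝔳(f_j) + jγ} on Q-expansions. Then ν_i < μ for every i ∈ I, i.e., ν_i(f) ≤ μ(f) for every f ∈ K[x] and ν_i(Q) < μ(Q) = γ. -/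
open Polynomial

open ValOn

/-! Since `Q` is not stable, the values `ν i (Q)` never stop increasing, while the coefficients `c j`
of a `Q`-expansion `f = ∑ c j * Q ^ j` have degree below `deg Q` and hence eventually constant
values `a j`. For fixed `a`, the minimum of the affine functions `q ↦ a j + j • q` is attained
twice at only finitely many `q`, so for arbitrarily large `i` the minimum at `q = ν i (Q)` is
attained once. For such `i` there is no cancellation in `f`, and
`ν i (f) = min_j (a j + j • ν i (Q)) ≤ min_j (a j + j • γ) = μ (f)`. -/

namespace ValOn

variable {R : Type*} [CommRing R] {Γ : Type*} [AddCommGroup Γ] [LinearOrder Γ] [IsOrderedAddMonoid Γ]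

theorem v_pow (w : ValOn R Γ) (a : R) (n : ℕ) : w.v (a ^ n) = n • w.v a := by
  induction n with
  | zero => simp [w.v_one]
  | succ n ih => rw [pow_succ, w.v_mul, ih, succ_nsmul]

theorem exists_ne_v_eq_inf'_of_inf'_lt_v_sum (w : ValOn R Γ) {α : Type*} {s : Finset α}
    (hs : s.Nonempty) (t : α → R) (h : s.inf' hs (fun a => w.v (t a)) < w.v (∑ a ∈ s, t a)) :
    ∃ a ∈ s, ∃ b ∈ s, a ≠ b ∧ w.v (t a) = s.inf' hs (fun a => w.v (t a)) ∧
      w.v (t b) = s.inf' hs (fun a => w.v (t a)) := by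
  classical
  set m := s.inf' hs (fun a => w.v (t a))
  obtain ⟨a, ha, hma⟩ := Finset.exists_mem_eq_inf' hs (fun a => w.v (t a))
  refine ⟨a, ha, ?_⟩
  by_contra! hunique
  have hrest : m < w.v (∑ b ∈ s.erase a, t b) :=
    w.lt_v_sum (ne_top_of_lt h) _ _ fun b hb =>
      (Finset.inf'_le _ (Finset.mem_of_mem_erase hb)).lt_of_ne (hunique b (Finset.mem_of_mem_erase hb) (Finset.ne_of_mem_erase hb).symm hma.symm).symm
  have hsplit : t a = ∑ b ∈ s, t b + -∑ b ∈ s.erase a, t b := by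
    rw [← Finset.add_sum_erase s t ha]; ring
  have hle := w.min_le_v_add (∑ b ∈ s, t b) (-∑ b ∈ s.erase a, t b)
  rw [← hsplit, w.v_neg, ← hma] at hle
  exact (lt_min h hrest).not_ge hle

end ValOn

namespace WithTop

variable {Γ : Type*} [AddCommGroup Γ] [LinearOrder Γ] [IsOrderedAddMonoid Γ]

theorem eq_of_add_nsmul_eq_add_nsmul {a b q q' : WithTop Γ} {j₁ j₂ : ℕ} (hj : j₁ < j₂)
    (hq : q ≠ ⊤) (hq' : q' ≠ ⊤) (hne : a + j₁ • q ≠ ⊤)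
    (h : a + j₁ • q = b + j₂ • q) (h' : a + j₁ • q' = b + j₂ • q') : q = q' := by
  obtain ⟨d, rfl⟩ := Nat.exists_eq_add_of_lt hj
  have ha : a ≠ ⊤ := fun ha => hne (by simp [ha])
  have hb : b ≠ ⊤ := fun hb => hne (by simp [h, hb])
  lift a to Γ using ha
  lift b to Γ using hb
  lift q to Γ using hq
  lift q' to Γ using hq'
  norm_cast at h h'
  have hdiff : ∀ x : Γ, a + j₁ • x = b + (j₁ + d + 1) • x → (d + 1) • x = a - b := fun x hx => by
    rw [eq_sub_iff_add_eq', ← add_right_cancel_iff (a := j₁ • x), hx, add_assoc, add_assoc,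
      ← add_nsmul]
    ring_nf
  exact congrArg _ (nsmul_right_injective d.succ_ne_zero ((hdiff q h).trans (hdiff q' h').symm))

theorem finite_setOf_add_nsmul_eq_add_nsmul (a : ℕ → WithTop Γ) (s : Finset ℕ) :
    {q : WithTop Γ | q ≠ ⊤ ∧ ∃ j₁ ∈ s, ∃ j₂ ∈ s, j₁ < j₂ ∧ a j₁ + j₁ • q ≠ ⊤ ∧
      a j₁ + j₁ • q = a j₂ + j₂ • q}.Finite := by
  refine (s.finite_toSet.biUnion fun j₁ _ => s.finite_toSet.biUnion fun j₂ _ =>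
    Set.Subsingleton.finite (s := {q : WithTop Γ | q ≠ ⊤ ∧ j₁ < j₂ ∧ a j₁ + j₁ • q ≠ ⊤ ∧
      a j₁ + j₁ • q = a j₂ + j₂ • q}) ?_).subset ?_
  · rintro q ⟨hq, hj, hne, h⟩ q' ⟨hq', -, -, h'⟩
    exact eq_of_add_nsmul_eq_add_nsmul hj hq hq' hne h h'
  · rintro q ⟨hq, j₁, h₁, j₂, h₂, hj, hne, h⟩
    simp only [Set.mem_iUnion]
    exact ⟨j₁, h₁, j₂, h₂, hq, hj, hne, h⟩

end WithTop

namespace Polynomial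

theorem exists_eq_sum_range_mul_pow {R : Type*} [CommRing R] {Q : R[X]} (hQ : Q.Monic)
    (hQd : 0 < Q.degree) (f : R[X]) :
    ∃ (r : ℕ) (c : ℕ → R[X]), f = ∑ j ∈ Finset.range (r + 1), c j * Q ^ j ∧
      ∀ j, (c j).degree < Q.degree := by
  have : Nontrivial R := Nontrivial.of_polynomial_ne (ne_zero_of_degree_gt hQd)
  have hQ0 : (0 : R[X]).degree < Q.degree := degree_zero.trans_lt (bot_lt_of_lt hQd)
  induction hn : f.natDegree using Nat.strong_induction_on generalizing f with
  | _ n ih =>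
  by_cases hf : f.degree < Q.degree
  · refine ⟨0, fun j => if j = 0 then f else 0, by simp, fun j => ?_⟩
    dsimp only
    split_ifs <;> assumption
  have hdeg : (f /ₘ Q).natDegree < n := by
    have := natDegree_le_natDegree (not_lt.mp hf)
    have := natDegree_pos_iff_degree_pos.mpr hQd
    rw [natDegree_divByMonic f hQ]; omega
  obtain ⟨r, c, hc, hcd⟩ := ih _ hdeg (f /ₘ Q) rfl
  refine ⟨r + 1, fun j => if j = 0 then f %ₘ Q else c (j - 1), ?_, fun j => ?_⟩
  · rw [Finset.sum_range_succ']
    simp only [Nat.add_one_ne_zero, if_false, if_true, Nat.add_sub_cancel, pow_zero, mul_one,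
      pow_succ, ← mul_assoc, ← Finset.sum_mul, ← hc]
    rw [mul_comm, add_comm, modByMonic_add_div]
  · dsimp only
    split_ifs
    exacts [degree_modByMonic_lt f hQ, hcd _]

end Polynomial

open Filter

section Stable

variable {K : Type*} [Field K] {Γ : Type*} [AddCommGroup Γ] [LinearOrder Γ] [IsOrderedAddMonoid Γ]
  {I : Type*} [Preorder I] {ν : I → ValOn K[X] Γ}

theorem stable_C [Nonempty I] {v₀ : K → WithTop Γ} (h : ∀ i a, (ν i).v (C a) = v₀ a) (a : K) :
    Stable ν (C a) :=
  ⟨Classical.arbitrary I, fun j _ => by rw [h, h]⟩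

theorem degree_pos_of_not_stable [Nonempty I] {v₀ : K → WithTop Γ}
    (h : ∀ i a, (ν i).v (C a) = v₀ a) {f : K[X]} (hf : ¬ Stable ν f) : 0 < f.degree :=
  not_le.mp fun hle => hf (eq_C_of_degree_le_zero hle ▸ stable_C h _)

theorem Stable.exists_eventually_eq {f : K[X]} (hf : Stable ν f) :
    ∃ a, ∀ᶠ i in atTop, (ν i).v f = a :=
  let ⟨i, hi⟩ := hf
  ⟨_, (eventually_ge_atTop i).mono hi⟩

theorem Stable.of_eventually_mem [IsDirectedOrder I] [Nonempty I] {f : K[X]}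
    (hmono : Monotone fun i => (ν i).v f) {S : Set (WithTop Γ)} (hS : S.Finite)
    (h : ∀ᶠ i in atTop, (ν i).v f ∈ S) : Stable ν f := by
  obtain ⟨i₀, hi₀⟩ := eventually_atTop.mp h
  set T := (fun i => (ν i).v f) '' Set.Ici i₀
  have hT : T.Finite := hS.subset (Set.image_subset_iff.mpr hi₀)
  obtain ⟨_, ⟨i₁, hi₁, rfl⟩, hmax⟩ := T.exists_max_image id hT ⟨_, i₀, le_rfl, rfl⟩
  exact ⟨i₁, fun j hj => (hmax _ ⟨j, le_trans hi₁ hj, rfl⟩).antisymm (hmono hj)⟩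

theorem frequently_v_sum_mul_pow_eq_inf' [IsDirectedOrder I] [Nonempty I] {Q : K[X]}
    (hmono : Monotone fun i => (ν i).v Q) (hQ : ¬ Stable ν Q) (hQtop : ∀ i, (ν i).v Q ≠ ⊤)
    {c : ℕ → K[X]} (hc : ∀ j, Stable ν (c j)) {s : Finset ℕ} (hs : s.Nonempty) :
    ∃ᶠ i in atTop, (ν i).v (∑ j ∈ s, c j * Q ^ j) =
      s.inf' hs fun j => (ν i).v (c j) + j • (ν i).v Q := by
  choose a ha using fun j => (hc j).exists_eventually_eq
  by_contra hfreq
  refine hQ (Stable.of_eventually_mem hmono (WithTop.finite_setOf_add_nsmul_eq_add_nsmul a s) ?_)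
  filter_upwards [not_frequently.mp hfreq, (eventually_all_finset s).mpr fun j _ => ha j]
    with i hne hca
  have hterm : ∀ j, (ν i).v (c j * Q ^ j) = (ν i).v (c j) + j • (ν i).v Q := fun j => by
    rw [ValOn.v_mul, ValOn.v_pow]
  have hlt : s.inf' hs (fun j => (ν i).v (c j * Q ^ j)) < (ν i).v (∑ j ∈ s, c j * Q ^ j) := by
    simp only [hterm]
    exact ((ν i).le_v_sum _ _ fun j hj => hterm j ▸ Finset.inf'_le _ hj).lt_of_ne' hne
  obtain ⟨j₁, h₁, j₂, h₂, hj, hv₁, hv₂⟩ := (ν i).exists_ne_v_eq_inf'_of_inf'_lt_v_sum hs _ hlt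
  have hfin := hv₁ ▸ ne_top_of_lt hlt
  rw [← hv₂] at hv₁
  simp only [hterm, hca _ h₁, hca _ h₂] at hv₁ hfin
  refine ⟨hQtop i, ?_⟩
  rcases hj.lt_or_gt with hj | hj
  · exact ⟨j₁, h₁, j₂, h₂, hj, hfin, hv₁⟩
  · exact ⟨j₂, h₂, j₁, h₁, hj, hv₁ ▸ hfin, hv₁.symm⟩

end Stable

theorem limit_valuation_dominates_general
    {K : Type*} [Field K] {Γ : Type*} [AddCommGroup Γ] [LinearOrder Γ] [IsOrderedAddMonoid Γ]
    {I : Type*} [LinearOrder I] [Nonempty I]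
    (ν₀ : ValOn K Γ) (ν : I → ValOn (Polynomial K) Γ)
    (hext : ∀ (i : I) (a : K), (ν i).v (Polynomial.C a) = ν₀.v a)
    (hmono : ∀ i j : I, i ≤ j → ∀ f : Polynomial K, (ν i).v f ≤ (ν j).v f)
    (Q : Polynomial K) (hQmonic : Q.Monic) (hQns : ¬ Stable ν Q)
    (hQmin : ∀ g : Polynomial K, ¬ Stable ν g → Q.degree ≤ g.degree)
    (γ : WithTop Γ) (hγ : ∀ i : I, (ν i).v Q < γ)
    (μ : ValOn (Polynomial K) Γ)
    (hμ : ∀ (f : Polynomial K) (r : ℕ) (c : ℕ → Polynomial K),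
      f = ∑ j ∈ Finset.range (r + 1), c j * Q ^ j →
      (∀ j : ℕ, (c j).degree < Q.degree) →
      ∃ i₀ : I, ∀ i : I, i₀ ≤ i →
        μ.v f = (Finset.range (r + 1)).inf' Finset.nonempty_range_add_one
          (fun j => (ν i).v (c j) + j • γ)) :
    (∀ (i : I) (f : Polynomial K), (ν i).v f ≤ μ.v f) ∧
    (∀ i : I, (ν i).v Q < μ.v Q) ∧ μ.v Q = γ := by
  have hQdeg : 0 < Q.degree := degree_pos_of_not_stable hext hQns
  have hstable : ∀ g : K[X], g.degree < Q.degree → Stable ν g :=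
    fun g hg => by_contra fun hg' => (hQmin g hg').not_gt hg
  have hμQ : μ.v Q = γ := by
    obtain ⟨i₀, hi₀⟩ := hμ Q 1 (fun j => if j = 1 then 1 else 0) (by simp)
      fun j => by split_ifs <;> simp [hQdeg, bot_lt_of_lt hQdeg]
    simp [hi₀ i₀ le_rfl, Finset.range_add_one, (ν i₀).v_zero, (ν i₀).v_one]
  refine ⟨fun i f => ?_, fun i => hμQ ▸ hγ i, hμQ⟩
  obtain ⟨r, c, hf, hc⟩ := exists_eq_sum_range_mul_pow hQmonic hQdeg f
  obtain ⟨i₀, hi₀⟩ := hμ f r c hf hc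
  obtain ⟨i', hi', hii', hi₀i'⟩ := ((frequently_v_sum_mul_pow_eq_inf'
    (fun i j hij => hmono i j hij Q) hQns (fun i => ne_top_of_lt (hγ i))
    (fun j => hstable _ (hc j)) Finset.nonempty_range_add_one).and_eventually
    ((eventually_ge_atTop i).and (eventually_ge_atTop i₀))).exists
  calc (ν i).v f ≤ (ν i').v f := hmono i i' hii' f
    _ = (Finset.range (r + 1)).inf' _ fun j => (ν i').v (c j) + j • (ν i').v Q := hf ▸ hi'
    _ ≤ (Finset.range (r + 1)).inf' _ fun j => (ν i').v (c j) + j • γ :=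
      Finset.inf'_mono_fun fun j _ => add_le_add_right (nsmul_le_nsmul_right (hγ i').le j) _
    _ = μ.v f := (hi₀ i' hi₀i').symm

/-- With `μ` as in the previous statement, `ν_i < μ` for every `i`:
`ν_i(f) ≤ μ(f)` for all `f`, and `ν_i(Q) < μ(Q) = γ`. -/
theorem limit_valuation_dominates
    {K : Type*} [Field K] {Γ : Type*} [AddCommGroup Γ] [LinearOrder Γ] [IsOrderedAddMonoid Γ]
    {I : Type*} [LinearOrder I] [Nonempty I]
    (ν₀ : ValOn K Γ) (ν : I → ValOn (Polynomial K) Γ)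
    (hext : ∀ (i : I) (a : K), (ν i).v (Polynomial.C a) = ν₀.v a)
    (hmono : ∀ i j : I, i ≤ j → ∀ f : Polynomial K, (ν i).v f ≤ (ν j).v f)
    (hstrict : ∀ i j : I, i < j → ∃ f : Polynomial K, (ν i).v f < (ν j).v f)
    (hnomax : ∀ i : I, ∃ j : I, i < j)
    (Q : Polynomial K) (hQmonic : Q.Monic) (hQns : ¬ Stable ν Q)
    (hQmin : ∀ g : Polynomial K, ¬ Stable ν g → Q.degree ≤ g.degree)
    (γ : WithTop Γ) (hγ : ∀ i : I, (ν i).v Q < γ)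
    (μ : ValOn (Polynomial K) Γ)
    (hμext : ∀ a : K, μ.v (Polynomial.C a) = ν₀.v a)
    (hμ : ∀ (f : Polynomial K) (r : ℕ) (c : ℕ → Polynomial K),
      f = ∑ j ∈ Finset.range (r + 1), c j * Q ^ j →
      (∀ j : ℕ, (c j).degree < Q.degree) →
      ∃ i₀ : I, ∀ i : I, i₀ ≤ i →
        μ.v f = (Finset.range (r + 1)).inf' Finset.nonempty_range_add_one
          (fun j => (ν i).v (c j) + j • γ)) :
    (∀ (i : I) (f : Polynomial K), (ν i).v f ≤ μ.v f) ∧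
    (∀ i : I, (ν i).v Q < μ.v Q) ∧ μ.v Q = γ :=
  limit_valuation_dominates_general ν₀ ν hext hmono Q hQmonic hQns hQmin γ hγ μ hμ
end
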